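/- arXiv:2011.07932 — 4 statements merged into one kernel-verified Lean document; each statement's English description precedes it below -/
import Mathlib

section
/- Regularized Donsker–Varadhan (ReDV) representation of the KL divergence: assume KL(μ‖ν) < ∞ and f > 0 ν-almost everywhere. Let d be a metric on ℝ and let C* ∈ ℝ be any constant. Then the supremum, over all measurable functions T : Ω → ℝ such that T is μ-integrable and e^T is ν-integrable, of the quantity ∫ T dμ − log(∫ e^T dν) − d(log(∫ e^T dν), C*) equals KL(μ‖ν). -/
/-!
Tilting `ν` by `e^T` gives a probability measure `ν_T` with
`∫ llr μ ν_T dμ = KL(μ‖ν) - ∫ T dμ + log ∫ e^T dν`, so Gibbs' inequality for `ν_T` is the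
Donsker–Varadhan bound `∫ T dμ - log ∫ e^T dν ≤ KL(μ‖ν)`; the penalty `d(·, C*)` is nonnegative.
Conversely `T = log f + C*` has `∫ e^T dν = e^{C*}` (this needs `f > 0` ν-a.e.), so for it the
penalty vanishes and the value is exactly `KL(μ‖ν)`.
-/

open MeasureTheory Real

lemma nonneg_of_self_eq_zero_of_symm_of_triangle {α : Type*} (d : α → α → ℝ)
    (hd_self : ∀ x, d x x = 0) (hd_symm : ∀ x y, d x y = d y x)
    (hd_triangle : ∀ x y z, d x z ≤ d x y + d y z) (x y : α) :
    0 ≤ d x y := by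
  have h := hd_triangle x y x
  rw [hd_self, hd_symm y x] at h
  linarith

namespace MeasureTheory

variable {Ω : Type*} [MeasurableSpace Ω] {μ ν : Measure Ω} {f : Ω → ℝ}

lemma integral_sub_log_integral_exp_le_integral_llr [IsProbabilityMeasure μ] [SigmaFinite ν]
    (hμν : μ ≪ ν) (h_int : Integrable (llr μ ν) μ) (hfμ : Integrable f μ)
    (hfν : Integrable (fun x ↦ exp (f x)) ν) :
    ∫ x, f x ∂μ - log (∫ x, exp (f x) ∂ν) ≤ ∫ x, llr μ ν x ∂μ := by
  have : NeZero ν := ⟨fun hν ↦ IsProbabilityMeasure.ne_zero μ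
    (Measure.absolutelyContinuous_zero_iff.mp (hν ▸ hμν))⟩
  have : IsProbabilityMeasure (ν.tilted f) := isProbabilityMeasure_tilted hfν
  have h_gibbs := InformationTheory.integral_llr_add_sub_measure_univ_nonneg
    (hμν.trans (absolutelyContinuous_tilted hfν)) (integrable_llr_tilted_right hμν hfμ h_int hfν)
  rw [integral_llr_tilted_right hμν hfμ hfν h_int] at h_gibbs
  simp only [probReal_univ] at h_gibbs
  linarith

lemma exp_llr_add_ae_eq (hpos : ∀ᵐ x ∂ν, 0 < (μ.rnDeriv ν x).toReal) (c : ℝ) :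
    (fun x ↦ exp (llr μ ν x + c)) =ᵐ[ν] fun x ↦ exp c * (μ.rnDeriv ν x).toReal := by
  filter_upwards [hpos] with x hx
  rw [exp_add, llr, exp_log hx, mul_comm]

lemma integrable_exp_llr_add [IsFiniteMeasure μ] (hpos : ∀ᵐ x ∂ν, 0 < (μ.rnDeriv ν x).toReal)
    (c : ℝ) : Integrable (fun x ↦ exp (llr μ ν x + c)) ν :=
  (Measure.integrable_toReal_rnDeriv.const_mul _).congr (exp_llr_add_ae_eq hpos c).symm

lemma log_integral_exp_llr_add [IsProbabilityMeasure μ] [SigmaFinite ν] (hμν : μ ≪ ν)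
    (hpos : ∀ᵐ x ∂ν, 0 < (μ.rnDeriv ν x).toReal) (c : ℝ) :
    log (∫ x, exp (llr μ ν x + c) ∂ν) = c := by
  rw [integral_congr_ae (exp_llr_add_ae_eq hpos c), integral_const_mul,
    Measure.integral_toReal_rnDeriv hμν, probReal_univ, mul_one, log_exp]

end MeasureTheory

/-- Regularized Donsker–Varadhan (ReDV) representation of the KL divergence: if
`KL(μ‖ν) = ∫ log f dμ` is finite (i.e. `log f` is μ-integrable, `f = dμ/dν`), `f > 0` ν-a.e.,
`d` is a metric on `ℝ` and `C* ∈ ℝ`, then the supremum, over all measurable `T : Ω → ℝ`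
with `T` μ-integrable and `e^T` ν-integrable, of
`∫ T dμ − log (∫ e^T dν) − d (log (∫ e^T dν)) C*` equals `KL(μ‖ν)`. -/
theorem reDV_representation
    {Ω : Type*} [MeasurableSpace Ω]
    (μ ν : Measure Ω) [IsProbabilityMeasure μ] [IsProbabilityMeasure ν]
    (hac : μ ≪ ν)
    (hKL : Integrable (fun ω => Real.log ((μ.rnDeriv ν ω).toReal)) μ)
    (hpos : ∀ᵐ ω ∂ν, 0 < ((μ.rnDeriv ν ω).toReal))
    (d : ℝ → ℝ → ℝ)
    (hd_eq : ∀ x y, d x y = 0 ↔ x = y)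
    (hd_symm : ∀ x y, d x y = d y x)
    (hd_triangle : ∀ x y z, d x z ≤ d x y + d y z)
    (Cstar : ℝ) :
    IsLUB {r : ℝ | ∃ T : Ω → ℝ, Measurable T ∧ Integrable T μ ∧
        Integrable (fun ω => Real.exp (T ω)) ν ∧
        r = ∫ ω, T ω ∂μ - Real.log (∫ ω, Real.exp (T ω) ∂ν)
            - d (Real.log (∫ ω, Real.exp (T ω) ∂ν)) Cstar}
      (∫ ω, Real.log ((μ.rnDeriv ν ω).toReal) ∂μ) := by
  change Integrable (llr μ ν) μ at hKL
  have hd_self (x : ℝ) : d x x = 0 := (hd_eq x x).mpr rfl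
  refine IsGreatest.isLUB ⟨⟨fun ω ↦ llr μ ν ω + Cstar, (measurable_llr μ ν).add_const _,
    hKL.add (integrable_const _), integrable_exp_llr_add hpos Cstar, ?_⟩, ?_⟩
  · rw [log_integral_exp_llr_add hac hpos, hd_self, integral_add hKL (integrable_const _),
      integral_const, probReal_univ, one_smul]
    simp only [llr, add_sub_cancel_right, sub_zero]
  · rintro r ⟨T, -, hTμ, hTν, rfl⟩
    have h_DV := integral_sub_log_integral_exp_le_integral_llr hac hKL hTμ hTν
    have h_penalty := nonneg_of_self_eq_zero_of_symm_of_triangle d hd_self hd_symm hd_triangle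
      (log (∫ ω, exp (T ω) ∂ν)) Cstar
    exact (sub_le_self _ h_penalty).trans h_DV
end

section
/- The micro-averaged Donsker–Varadhan estimate is strictly biased under non-constant per-batch drift: let B, N be positive integers, let T^J : Fin B × Fin N → ℝ be any array, let S : Fin N → ℝ, and let C : Fin B → ℝ be per-batch drift constants that are not all equal. Then (1/(NB)) Σ_{i,j} (T^J_{ij} + C_i) − log( (1/(NB)) Σ_{i,j} e^{S_j + C_i} ) < (1/(NB)) Σ_{i,j} T^J_{ij} − log( (1/N) Σ_{j} e^{S_j} ); indeed the difference of the two sides equals (1/B) Σ_i C_i − log( (1/B) Σ_i e^{C_i} ), which is strictly negative by the strict convexity of the exponential. -/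
/-! The marginal sum factors as `(∑ⱼ e^{Sⱼ}) (∑ᵢ e^{Cᵢ})`, so the log of the pooled mean splits
into the undrifted log-mean-exp plus `log ((1/B) ∑ᵢ e^{Cᵢ})`, while the drift adds the mean of `C`
to the joint term. The difference is therefore `mean C - log (mean (exp ∘ C))`, which is negative
by strict Jensen for `exp`. -/

open Real

open Finset in
theorem mean_lt_log_mean_exp {ι : Type*} [Fintype ι] (C : ι → ℝ) (hC : ∃ i i', C i ≠ C i') :
    1 / (Fintype.card ι : ℝ) * ∑ i, C i < log (1 / Fintype.card ι * ∑ i, exp (C i)) := by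
  obtain ⟨i, i', hne⟩ := hC
  have hcard : (0 : ℝ) < Fintype.card ι := by
    have : Nonempty ι := ⟨i⟩
    exact_mod_cast Fintype.card_pos
  have hjensen := strictConvexOn_exp.map_sum_lt (t := univ) (w := fun _ ↦ 1 / (Fintype.card ι : ℝ))
    (p := C) (fun _ _ ↦ by positivity) (by simp [card_univ, hcard.ne'])
    (fun _ _ ↦ Set.mem_univ _) ⟨i, mem_univ _, i', mem_univ _, hne⟩
  simp only [smul_eq_mul, ← mul_sum] at hjensen
  exact (lt_log_iff_exp_lt ((exp_pos _).trans hjensen)).2 hjensen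

section Pooled

open Fintype

variable {ι κ : Type*} [Fintype ι] [Fintype κ]

theorem mean_sum_add_drift [Nonempty κ] (T : ι → κ → ℝ) (C : ι → ℝ) :
    1 / ((card κ : ℝ) * card ι) * ∑ i, ∑ j, (T i j + C i)
      = 1 / ((card κ : ℝ) * card ι) * ∑ i, ∑ j, T i j + 1 / (card ι : ℝ) * ∑ i, C i := by
  have hκ : (card κ : ℝ) ≠ 0 := by exact_mod_cast card_ne_zero
  simp only [Finset.sum_add_distrib, Finset.sum_const, Finset.card_univ, nsmul_eq_mul,
    ← Finset.mul_sum]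
  field_simp

theorem log_mean_exp_add [Nonempty ι] [Nonempty κ] (S : κ → ℝ) (C : ι → ℝ) :
    log (1 / ((card κ : ℝ) * card ι) * ∑ i, ∑ j, exp (S j + C i))
      = log (1 / (card κ : ℝ) * ∑ j, exp (S j)) + log (1 / (card ι : ℝ) * ∑ i, exp (C i)) := by
  have hfactor : ∑ i, ∑ j, exp (S j + C i) = (∑ j, exp (S j)) * ∑ i, exp (C i) := by
    rw [Fintype.sum_mul_sum, Finset.sum_comm]
    simp only [exp_add]
  rw [hfactor, ← log_mul (by positivity) (by positivity)]
  ring_nf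

end Pooled

theorem micro_average_drift_biased_general
    (B N : ℕ) (hN : 0 < N)
    (TJ : Fin B → Fin N → ℝ) (S : Fin N → ℝ) (C : Fin B → ℝ)
    (hC : ∃ i i' : Fin B, C i ≠ C i') :
    ((1 / ((N : ℝ) * B)) * ∑ i, ∑ j, (TJ i j + C i)
        - Real.log ((1 / ((N : ℝ) * B)) * ∑ i, ∑ j, Real.exp (S j + C i))
      < (1 / ((N : ℝ) * B)) * ∑ i, ∑ j, TJ i j
        - Real.log ((1 / (N : ℝ)) * ∑ j, Real.exp (S j)))
    ∧ ((1 / ((N : ℝ) * B)) * ∑ i, ∑ j, (TJ i j + C i)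
        - Real.log ((1 / ((N : ℝ) * B)) * ∑ i, ∑ j, Real.exp (S j + C i))
      - ((1 / ((N : ℝ) * B)) * ∑ i, ∑ j, TJ i j
        - Real.log ((1 / (N : ℝ)) * ∑ j, Real.exp (S j)))
      = (1 / (B : ℝ)) * ∑ i, C i - Real.log ((1 / (B : ℝ)) * ∑ i, Real.exp (C i))) := by
  have : Nonempty (Fin B) := let ⟨i, _⟩ := hC; ⟨i⟩
  have : Nonempty (Fin N) := ⟨⟨0, hN⟩⟩
  have hmean := mean_sum_add_drift TJ C
  have hlog := log_mean_exp_add S C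
  have hjensen := mean_lt_log_mean_exp C hC
  simp only [Fintype.card_fin] at hmean hlog hjensen
  rw [hmean, hlog]
  exact ⟨by linarith, by ring⟩

/-- The micro-averaged Donsker–Varadhan estimate is strictly biased under non-constant
per-batch drift: with joint outputs `T^J`, identical-across-batches marginal outputs `S`,
and per-batch drift constants `C` that are not all equal, the pooled (micro-averaged) DV
estimate of the drifted outputs is strictly smaller than the undrifted one; indeed the
difference of the two sides is `(1/B) Σ C_i − log ((1/B) Σ e^(C_i)) < 0`. -/
theorem micro_average_drift_biased
    (B N : ℕ) (hB : 0 < B) (hN : 0 < N)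
    (TJ : Fin B → Fin N → ℝ) (S : Fin N → ℝ) (C : Fin B → ℝ)
    (hC : ∃ i i' : Fin B, C i ≠ C i') :
    ((1 / ((N : ℝ) * B)) * ∑ i, ∑ j, (TJ i j + C i)
        - Real.log ((1 / ((N : ℝ) * B)) * ∑ i, ∑ j, Real.exp (S j + C i))
      < (1 / ((N : ℝ) * B)) * ∑ i, ∑ j, TJ i j
        - Real.log ((1 / (N : ℝ)) * ∑ j, Real.exp (S j)))
    ∧ ((1 / ((N : ℝ) * B)) * ∑ i, ∑ j, (TJ i j + C i)
        - Real.log ((1 / ((N : ℝ) * B)) * ∑ i, ∑ j, Real.exp (S j + C i))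
      - ((1 / ((N : ℝ) * B)) * ∑ i, ∑ j, TJ i j
        - Real.log ((1 / (N : ℝ)) * ∑ j, Real.exp (S j)))
      = (1 / (B : ℝ)) * ∑ i, C i - Real.log ((1 / (B : ℝ)) * ∑ i, Real.exp (C i))) :=
  micro_average_drift_biased_general B N hN TJ S C hC
end

section
/- Contrastive learning benchmark (ground-truth MI between two samples sharing a deterministic label): let (Ω, 𝓕, P) be a probability space, X₁, X₂ : Ω → α random variables into a standard Borel measurable space α, S a finite set, and g : α → S a measurable labeling function such that Y := g ∘ X₁ = g ∘ X₂ almost surely. Assume X₁ and X₂ are conditionally independent given the σ-algebra generated by Y. Then I(X₁, X₂), defined as the Kullback–Leibler divergence of the joint law of (X₁, X₂) with respect to the product of the marginal laws of X₁ and of X₂, equals the Shannon entropy H(Y) = Σ_{s ∈ S} −P(Y = s) · log P(Y = s). -/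
/-!
The joint law of `(X₁, X₂)` has density `q ↦ 1{g q.1 = g q.2} / P(Y = g q.1)` with respect to
the product of the marginals: splitting along the fibers of `Y` and using conditional
independence on each, both measures give a rectangle `A × B` the mass
`Σ_s P(X₁ ∈ A, Y = s) P(X₂ ∈ B, Y = s) / P(Y = s)` (the second factor uses `g X₂ = Y` a.s.).
Since the labels agree a.s., the log-density is `-log P(Y = g X₁)` a.s., and its expectation
is `H(Y)`.
-/

open MeasureTheory Real
open scoped ENNReal

section Fiber

variable {Ω S : Type*} [MeasurableSpace Ω] [MeasurableSpace S] [MeasurableSingletonClass S]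
  [Fintype S]

theorem measure_eq_sum_measure_inter_fiber (P : Measure Ω) {Y : Ω → S} (hY : Measurable Y)
    (E : Set Ω) : P E = ∑ s, P (E ∩ {ω | Y ω = s}) := by
  have := sum_measure_preimage_singleton (μ := P.restrict E) Finset.univ
    fun s _ => hY (measurableSet_singleton s)
  rw [Finset.coe_univ, Set.preimage_univ, Measure.restrict_apply_univ] at this
  rw [← this]
  refine Finset.sum_congr rfl fun s _ => ?_
  rw [Measure.restrict_apply (hY (measurableSet_singleton s)), Set.inter_comm]
  rfl

theorem integral_comp_eq_sum_measureReal_fiber (P : Measure Ω) [IsFiniteMeasure P]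
    {Y : Ω → S} (hY : Measurable Y) (F : S → ℝ) :
    ∫ ω, F (Y ω) ∂P = ∑ s, P.real {ω | Y ω = s} * F s := by
  rw [← integral_map hY.aemeasurable (measurable_of_finite F).aestronglyMeasurable,
    integral_fintype .of_finite]
  refine Finset.sum_congr rfl fun s _ => ?_
  rw [map_measureReal_apply hY (measurableSet_singleton s), smul_eq_mul]
  rfl

end Fiber

theorem measure_inter_inter_eq_inv_mul {Ω : Type*} [MeasurableSpace Ω] (P : Measure Ω)
    [IsFiniteMeasure P] {E₁ E₂ F : Set Ω}
    (h : P (E₁ ∩ E₂ ∩ F) * P F = P (E₁ ∩ F) * P (E₂ ∩ F)) :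
    P (E₁ ∩ E₂ ∩ F) = (P F)⁻¹ * (P (E₁ ∩ F) * P (E₂ ∩ F)) := by
  rcases eq_or_ne (P F) 0 with hF | hF
  · simp [measure_mono_null Set.inter_subset_right hF]
  · rw [← h, mul_comm, mul_assoc, ENNReal.mul_inv_cancel hF (measure_ne_top P F), mul_one]

theorem integral_log_rnDeriv_eq_of_eq_withDensity {β : Type*} [MeasurableSpace β]
    {μ ν : Measure β} [SigmaFinite ν] {f : β → ℝ≥0∞} (hf : Measurable f)
    (h : μ = ν.withDensity f) :
    ∫ x, log (μ.rnDeriv ν x).toReal ∂μ = ∫ x, log (f x).toReal ∂μ := by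
  have hrn : μ.rnDeriv ν =ᵐ[ν] f := h ▸ Measure.rnDeriv_withDensity ν hf
  have hac : μ ≪ ν := h ▸ withDensity_absolutelyContinuous ν f
  exact integral_congr_ae ((hac.ae_eq hrn).mono fun x hx => by simp only [hx])

section BlockDensity

variable {α S : Type*} [Fintype S] {g : α → S} {p : S → ℝ≥0∞}

/-- The function `q ↦ 1{g q.1 = g q.2} / p (g q.1)`, written as a sum over the diagonal blocks. -/
noncomputable def blockDensity (g : α → S) (p : S → ℝ≥0∞) (q : α × α) : ℝ≥0∞ :=
  ∑ s, ((g ⁻¹' {s}) ×ˢ (g ⁻¹' {s})).indicator (fun _ => (p s)⁻¹) q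

theorem blockDensity_of_eq {q : α × α} (hq : g q.1 = g q.2) :
    blockDensity g p q = (p (g q.1))⁻¹ := by
  rw [blockDensity, Finset.sum_eq_single (g q.1)]
  · exact Set.indicator_of_mem (by simp [hq]) _
  · intro s _ hs
    exact Set.indicator_of_notMem (fun hmem => hs (Set.mem_prod.1 hmem).1.symm) _
  · simp

end BlockDensity

section Measurable

variable {α S : Type*} [MeasurableSpace α] [MeasurableSpace S] [MeasurableSingletonClass S]
  {g : α → S}

theorem measurableSet_fiber_prod_fiber (hg : Measurable g) (s : S) :
    MeasurableSet ((g ⁻¹' {s}) ×ˢ (g ⁻¹' {s})) :=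
  (hg (measurableSet_singleton s)).prod (hg (measurableSet_singleton s))

variable [Fintype S] {p : S → ℝ≥0∞}

theorem measurable_blockDensity (hg : Measurable g) : Measurable (blockDensity g p) :=
  Finset.measurable_sum _ fun s _ =>
    measurable_const.indicator (measurableSet_fiber_prod_fiber hg s)

theorem setLIntegral_blockDensity_prod (hg : Measurable g) (ν₁ ν₂ : Measure α) [SFinite ν₂]
    {A B : Set α} :
    ∫⁻ q in A ×ˢ B, blockDensity g p q ∂(ν₁.prod ν₂)
      = ∑ s, (p s)⁻¹ * (ν₁ (g ⁻¹' {s} ∩ A) * ν₂ (g ⁻¹' {s} ∩ B)) := by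
  simp only [blockDensity]
  have hblock := measurableSet_fiber_prod_fiber hg (α := α)
  rw [lintegral_finsetSum _ fun s _ => measurable_const.indicator (hblock s)]
  refine Finset.sum_congr rfl fun s _ => ?_
  rw [lintegral_indicator (hblock s), setLIntegral_const, Measure.restrict_apply (hblock s),
    Set.prod_inter_prod, Measure.prod_prod]

end Measurable

section Joint

variable {Ω α S : Type*} [MeasurableSpace Ω] [MeasurableSpace α]

/-- Since `Y` takes finitely many values, conditional independence given `σ(Y)` is this
factorization on each fiber `{Y = s}`. -/
def CondIndepGivenLabel (P : Measure Ω) (X₁ X₂ : Ω → α) (Y : Ω → S) : Prop :=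
  ∀ A B : Set α, MeasurableSet A → MeasurableSet B → ∀ s : S,
    P ({ω | X₁ ω ∈ A} ∩ {ω | X₂ ω ∈ B} ∩ {ω | Y ω = s}) * P {ω | Y ω = s}
      = P ({ω | X₁ ω ∈ A} ∩ {ω | Y ω = s}) * P ({ω | X₂ ω ∈ B} ∩ {ω | Y ω = s})

variable [MeasurableSpace S] [MeasurableSingletonClass S] [Fintype S]

theorem map_prodMk_eq_withDensity_blockDensity {P : Measure Ω} [IsFiniteMeasure P]
    {X₁ X₂ : Ω → α} {g : α → S} (hX₁ : Measurable X₁) (hX₂ : Measurable X₂)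
    (hg : Measurable g) (hY : ∀ᵐ ω ∂P, g (X₁ ω) = g (X₂ ω))
    (hcond : CondIndepGivenLabel P X₁ X₂ fun ω => g (X₁ ω)) :
    P.map (fun ω => (X₁ ω, X₂ ω))
      = ((P.map X₁).prod (P.map X₂)).withDensity
          (blockDensity g fun s => P {ω | g (X₁ ω) = s}) := by
  refine Measure.ext_prod fun {A B} hA hB => ?_
  have hfiber (s : S) : MeasurableSet (g ⁻¹' {s}) := hg (measurableSet_singleton s)
  rw [Measure.map_apply (hX₁.prodMk hX₂) (hA.prod hB), withDensity_apply _ (hA.prod hB),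
    setLIntegral_blockDensity_prod hg, measure_eq_sum_measure_inter_fiber P (hg.comp hX₁)]
  refine Finset.sum_congr rfl fun s _ => ?_
  have hlabel₁ : P ({ω | X₁ ω ∈ A} ∩ {ω | g (X₁ ω) = s}) = P (X₁ ⁻¹' (g ⁻¹' {s} ∩ A)) := by
    rw [Set.preimage_inter, Set.inter_comm]
    rfl
  have hlabel₂ : P ({ω | X₂ ω ∈ B} ∩ {ω | g (X₁ ω) = s}) = P (X₂ ⁻¹' (g ⁻¹' {s} ∩ B)) := by
    refine measure_congr (Filter.eventuallyEq_set.2 ?_)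
    filter_upwards [hY] with ω hω
    simp [hω, and_comm]
  rw [Measure.map_apply hX₁ ((hfiber s).inter hA), Measure.map_apply hX₂ ((hfiber s).inter hB),
    ← hlabel₁, ← hlabel₂]
  exact measure_inter_inter_eq_inv_mul P (hcond A B hA hB s)

end Joint

theorem contrastive_learning_benchmark_general
    {Ω : Type*} [MeasurableSpace Ω] (P : Measure Ω) [IsProbabilityMeasure P]
    {α : Type*} [MeasurableSpace α]
    {S : Type*} [Fintype S] [MeasurableSpace S] [MeasurableSingletonClass S]
    (X₁ X₂ : Ω → α) (hX₁ : Measurable X₁) (hX₂ : Measurable X₂)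
    (g : α → S) (hg : Measurable g)
    (hY : ∀ᵐ ω ∂P, g (X₁ ω) = g (X₂ ω))
    (hcondIndep : ∀ (A B : Set α), MeasurableSet A → MeasurableSet B → ∀ s : S,
      P ({ω | X₁ ω ∈ A} ∩ {ω | X₂ ω ∈ B} ∩ {ω | g (X₁ ω) = s}) * P {ω | g (X₁ ω) = s}
        = P ({ω | X₁ ω ∈ A} ∩ {ω | g (X₁ ω) = s})
          * P ({ω | X₂ ω ∈ B} ∩ {ω | g (X₁ ω) = s})) :
    (∫ p, Real.log
        (((P.map (fun ω => (X₁ ω, X₂ ω))).rnDeriv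
            ((P.map X₁).prod (P.map X₂)) p).toReal)
      ∂(P.map (fun ω => (X₁ ω, X₂ ω))))
    = ∑ s : S, -(P {ω | g (X₁ ω) = s}).toReal * Real.log ((P {ω | g (X₁ ω) = s}).toReal) := by
  have hpair : AEMeasurable (fun ω => (X₁ ω, X₂ ω)) P := (hX₁.prodMk hX₂).aemeasurable
  have hdiag : ∀ᵐ q ∂P.map (fun ω => (X₁ ω, X₂ ω)), g q.1 = g q.2 :=
    (ae_map_iff hpair (measurableSet_eq_fun (hg.comp measurable_fst)
      (hg.comp measurable_snd))).2 hY
  set F : S → ℝ := fun s => log (P {ω | g (X₁ ω) = s})⁻¹.toReal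
  have hF : Measurable fun q : α × α => F (g q.1) :=
    (measurable_of_finite F).comp (hg.comp measurable_fst)
  rw [integral_log_rnDeriv_eq_of_eq_withDensity (measurable_blockDensity hg)
      (map_prodMk_eq_withDensity_blockDensity hX₁ hX₂ hg hY hcondIndep),
    integral_congr_ae (hdiag.mono fun q hq => by rw [blockDensity_of_eq hq]),
    integral_map hpair hF.aestronglyMeasurable]
  dsimp only
  rw [integral_comp_eq_sum_measureReal_fiber P (Y := fun ω => g (X₁ ω)) (hg.comp hX₁) F]
  simp only [F, measureReal_def, ENNReal.toReal_inv, log_inv, mul_neg, neg_mul]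

/-- Contrastive learning benchmark: let `X₁, X₂ : Ω → α` be random variables into a standard
Borel space `α`, `S` a finite set, and `g : α → S` a measurable labeling function with
`Y := g ∘ X₁ = g ∘ X₂` almost surely.  Assume `X₁` and `X₂` are conditionally independent
given `Y` (expressed elementarily, for the finite-valued conditioning variable `Y`, as the
factorization `P(X₁ ∈ A, X₂ ∈ B, Y = s) · P(Y = s) = P(X₁ ∈ A, Y = s) · P(X₂ ∈ B, Y = s)`
for all measurable `A`, `B` and all `s`, which is conditional independence given the
σ-algebra generated by `Y`).  Then `I(X₁, X₂)`, defined as the KL divergence of the joint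
law of `(X₁, X₂)` with respect to the product of the marginal laws (computed as
`∫ log (d joint / d product) d joint`), equals the Shannon entropy
`H(Y) = Σ_s −P(Y = s) log P(Y = s)`. -/
theorem contrastive_learning_benchmark
    {Ω : Type*} [MeasurableSpace Ω] (P : Measure Ω) [IsProbabilityMeasure P]
    {α : Type*} [MeasurableSpace α] [StandardBorelSpace α]
    {S : Type*} [Fintype S] [MeasurableSpace S] [MeasurableSingletonClass S]
    (X₁ X₂ : Ω → α) (hX₁ : Measurable X₁) (hX₂ : Measurable X₂)
    (g : α → S) (hg : Measurable g)
    (hY : ∀ᵐ ω ∂P, g (X₁ ω) = g (X₂ ω))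
    (hcondIndep : ∀ (A B : Set α), MeasurableSet A → MeasurableSet B → ∀ s : S,
      P ({ω | X₁ ω ∈ A} ∩ {ω | X₂ ω ∈ B} ∩ {ω | g (X₁ ω) = s}) * P {ω | g (X₁ ω) = s}
        = P ({ω | X₁ ω ∈ A} ∩ {ω | g (X₁ ω) = s})
          * P ({ω | X₂ ω ∈ B} ∩ {ω | g (X₁ ω) = s})) :
    (∫ p, Real.log
        (((P.map (fun ω => (X₁ ω, X₂ ω))).rnDeriv
            ((P.map X₁).prod (P.map X₂)) p).toReal)
      ∂(P.map (fun ω => (X₁ ω, X₂ ω))))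
    = ∑ s : S, -(P {ω | g (X₁ ω) = s}).toReal * Real.log ((P {ω | g (X₁ ω) = s}).toReal) :=
  contrastive_learning_benchmark_general P X₁ X₂ hX₁ hX₂ g hg hY hcondIndep
end

section
/- Estimation lemma for ReMINE (almost-sure convergence of the empirical value over a compact parameter set): let Ω be a measurable space, μ and ν probability measures on Ω, Θ ⊂ ℝ^d a compact set, and T : Θ × Ω → ℝ a jointly measurable function that is continuous in θ for each fixed ω and satisfies |T(θ, ω)| ≤ M for all θ, ω. Fix C* ∈ ℝ and let d₀ be the absolute-value distance on ℝ. Let (X_i)_{i≥1} be i.i.d. with law μ and (Y_i)_{i≥1} be i.i.d. with law ν, independent of each other, and define Î_n = sup_{θ ∈ Θ} [ (1/n) Σ_{i≤n} T(θ, X_i) − log( (1/n) Σ_{i≤n} e^{T(θ, Y_i)} ) − d₀( log( (1/n) Σ_{i≤n} e^{T(θ, Y_i)} ), C* ) ] and Î = sup_{θ ∈ Θ} [ ∫ T(θ, ·) dμ − log(∫ e^{T(θ, ·)} dν) − d₀( log(∫ e^{T(θ, ·)} dν), C* ) ]. Then almost surely, for every η > 0 there exists N ∈ ℕ such that for all n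 ≥ N, |Î_n − Î| ≤ η. -/
/-!
The empirical objective at `θ` is `Φ(aₙ(θ), bₙ(θ))` with `Φ(a, b) = a - log b - |log b - C*|`,
`aₙ(θ) = (1/n) Σ T(θ, Xᵢ)` and `bₙ(θ) = (1/n) Σ exp T(θ, Yᵢ)`; the population objective is
`Φ(a(θ), b(θ))` for the corresponding means. Since `b(θ) ∈ [e^{-M}, e^M]`, once `bₙ` is uniformly
close to `b` both stay in a compact subinterval of `(0, ∞)`, where `Φ` is uniformly continuous.
So it suffices that both empirical means converge uniformly in `θ ∈ Θ`: a supremum moves by at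
most the uniform distance between the functions.

Uniform convergence is a uniform strong law of large numbers, proved by bracketing: by dominated
convergence the local upper envelope `sup_{K ∩ B(c, r)} f(·, ω)` has mean at most `∫ f(θ, ·) + ε`
for all `θ` near `c` once `r` is small; compactness gives finitely many such envelopes, and the
ordinary strong law applied to each of them bounds the empirical means from above uniformly in
`θ`. Applying this to `-f` gives the lower bound.
-/

open MeasureTheory ProbabilityTheory Real Filter Topology Metric Set

namespace ReMINE

lemma eventually_forall_pos_of_forall_pos {α : Type*} {l : Filter α} [CountableInterFilter l]
    {p : ℝ → α → Prop} (hp : ∀ a ε ε', ε ≤ ε' → p ε a → p ε' a)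
    (h : ∀ ε > 0, ∀ᶠ a in l, p ε a) : ∀ᶠ a in l, ∀ ε > 0, p ε a := by
  filter_upwards [eventually_countable_forall.2 fun m : ℕ => h (1 / (m + 1)) Nat.one_div_pos_of_nat]
    with a ha ε hε
  obtain ⟨m, hm⟩ := exists_nat_one_div_lt hε
  exact hp a _ _ hm.le (ha m)

lemma abs_iSup_sub_iSup_le {ι : Sort*} {F G : ι → ℝ} {c : ℝ} (hc : 0 ≤ c)
    (hG : BddAbove (range G)) (h : ∀ i, |F i - G i| ≤ c) : |(⨆ i, F i) - ⨆ i, G i| ≤ c := by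
  rcases isEmpty_or_nonempty ι with hι | hι
  · simpa using hc
  have hF : BddAbove (range F) := by
    obtain ⟨b, hb⟩ := hG
    refine ⟨b + c, ?_⟩
    rintro _ ⟨i, rfl⟩
    linarith [(abs_le.1 (h i)).2, hb ⟨i, rfl⟩]
  rw [abs_sub_le_iff, sub_le_iff_le_add', sub_le_iff_le_add']
  constructor
  · exact ciSup_le fun i => by linarith [(abs_le.1 (h i)).2, le_ciSup hG i]
  · exact ciSup_le fun i => by linarith [(abs_le.1 (h i)).1, le_ciSup hF i]

lemma TendstoUniformlyOn.tendsto_iSup {α ι : Type*} {l : Filter ι} {F : ι → α → ℝ} {f : α → ℝ}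
    {K : Set α} (h : TendstoUniformlyOn F f l K) (hf : BddAbove (f '' K)) :
    Tendsto (fun n => ⨆ x : K, F n x) l (𝓝 (⨆ x : K, f x)) := by
  rw [image_eq_range] at hf
  refine Metric.tendsto_nhds.2 fun ε hε => ?_
  filter_upwards [Metric.tendstoUniformlyOn_iff.1 h (ε / 2) (half_pos hε)] with n hn
  refine (abs_iSup_sub_iSup_le (half_pos hε).le hf fun x => ?_).trans_lt (half_lt_self hε)
  rw [← Real.dist_eq, dist_comm]
  exact (hn x x.2).le

lemma tendstoUniformlyOn_sub_log_sub_abs_log_sub {α ι : Type*} {l : Filter ι}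
    {F G : ι → α → ℝ} {f g : α → ℝ} {K : Set α} {a b : ℝ} (C : ℝ) (ha : 0 < a)
    (hF : TendstoUniformlyOn F f l K) (hG : TendstoUniformlyOn G g l K)
    (hg : ∀ x ∈ K, g x ∈ Icc a b) :
    TendstoUniformlyOn (fun n x => F n x - log (G n x) - |log (G n x) - C|)
      (fun x => f x - log (g x) - |log (g x) - C|) l K := by
  have hGmem : ∀ᶠ n in l, ∀ x ∈ K, G n x ∈ Icc (a / 2) (b + a / 2) := by
    filter_upwards [Metric.tendstoUniformlyOn_iff.1 hG (a / 2) (half_pos ha)] with n hn x hx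
    have hdist := abs_lt.1 (Real.dist_eq _ _ ▸ hn x hx)
    have hgx := hg x hx
    constructor <;> linarith [hgx.1, hgx.2]
  have hlog : UniformContinuousOn log (Icc (a / 2) (b + a / 2)) :=
    isCompact_Icc.uniformContinuousOn_of_continuous
      (continuousOn_log.mono fun x hx => (half_pos ha).trans_le hx.1 |>.ne')
  have hlogG := hlog.comp_tendstoUniformlyOn_eventually hGmem
    (fun x hx => ⟨by linarith [(hg x hx).1], by linarith [(hg x hx).2]⟩) hG
  have hdist : UniformContinuous fun y : ℝ => |y - C| :=
    Real.uniformContinuous_abs.comp (uniformContinuous_id.sub uniformContinuous_const)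
  exact (hF.sub hlogG).sub (hdist.comp_tendstoUniformlyOn hlogG)

lemma sub_log_sub_abs_log_sub_le {a b c C M : ℝ} (ha : a ≤ M) (hc : 0 < c) (hcb : c ≤ b) :
    a - log b - |log b - C| ≤ M - log c := by
  linarith [log_le_log hc hcb, abs_nonneg (log b - C)]

lemma integral_mem_Icc {α : Type*} [MeasurableSpace α] {ρ : Measure α} [IsProbabilityMeasure ρ]
    {g : α → ℝ} {a b : ℝ} (hg : AEStronglyMeasurable g ρ) (hab : ∀ᵐ x ∂ρ, g x ∈ Icc a b) :
    ∫ x, g x ∂ρ ∈ Icc a b :=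
  (convex_Icc a b).integral_mem isClosed_Icc hab <|
    .of_bound hg (max |a| |b|) (hab.mono fun _ hx => abs_le_max_abs_abs hx.1 hx.2)

noncomputable def ballSup {E : Type*} [PseudoMetricSpace E] (g : E → ℝ) (K : Set E) (c : E)
    (r : ℝ) : ℝ :=
  ⨆ x : ↥(K ∩ ball c r), g x

section ballSup

variable {E : Type*} [PseudoMetricSpace E] {K : Set E} {c : E} {r M : ℝ}

lemma le_ballSup {g : E → ℝ} (hg : ∀ x ∈ K, g x ≤ M) {x : E} (hx : x ∈ K ∩ ball c r) :
    g x ≤ ballSup g K c r :=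
  le_ciSup (f := fun y : ↥(K ∩ ball c r) => g y) ⟨M, by rintro _ ⟨y, rfl⟩; exact hg y y.2.1⟩
    ⟨x, hx⟩

lemma ballSup_le {g : E → ℝ} (hc : c ∈ K) (hr : 0 < r) {b : ℝ}
    (hg : ∀ x ∈ K ∩ ball c r, g x ≤ b) : ballSup g K c r ≤ b :=
  have : Nonempty ↥(K ∩ ball c r) := ⟨⟨c, hc, mem_ball_self hr⟩⟩
  ciSup_le fun x => hg x x.2

lemma abs_ballSup_le {g : E → ℝ} (hc : c ∈ K) (hr : 0 < r) (hg : ∀ x ∈ K, |g x| ≤ M) :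
    |ballSup g K c r| ≤ M :=
  abs_le.2 ⟨(abs_le.1 (hg c hc)).1.trans
      (le_ballSup (fun x hx => (abs_le.1 (hg x hx)).2) ⟨hc, mem_ball_self hr⟩),
    ballSup_le hc hr fun x hx => (abs_le.1 (hg x hx.1)).2⟩

lemma tendsto_ballSup {g : E → ℝ} (hc : c ∈ K) (hg : ContinuousWithinAt g K c)
    (hgM : ∀ x ∈ K, g x ≤ M) : Tendsto (ballSup g K c) (𝓝[>] 0) (𝓝 (g c)) := by
  refine tendsto_order.2 ⟨fun a ha => ?_, fun b hb => ?_⟩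
  · filter_upwards [self_mem_nhdsWithin] with r hr
    exact ha.trans_le (le_ballSup hgM ⟨hc, mem_ball_self hr⟩)
  · obtain ⟨δ, hδ, hsub⟩ := Metric.mem_nhdsWithin_iff.1
      (hg.eventually (eventually_lt_nhds (left_lt_add_div_two.2 hb)))
    filter_upwards [Ioo_mem_nhdsGT hδ] with r hr
    refine (ballSup_le hc hr.1 fun x hx => ?_).trans_lt (add_div_two_lt_right.2 hb)
    exact (hsub ⟨ball_subset_ball hr.2.le hx.2, hx.1⟩).le

lemma measurable_ballSup {Ω : Type*} [MeasurableSpace Ω] {f : E → Ω → ℝ}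
    (hK : TopologicalSpace.IsSeparable K)
    (hmeas : ∀ x ∈ K, Measurable (f x)) (hcont : ∀ ω, ContinuousOn (f · ω) K) :
    Measurable fun ω => ballSup (f · ω) K c r := by
  have := (hK.mono (inter_subset_left (t := ball c r))).separableSpace
  obtain ⟨S, hS, hSdense⟩ := TopologicalSpace.exists_countable_dense ↥(K ∩ ball c r)
  have := hS.to_subtype
  have hsup : (fun ω => ballSup (f · ω) K c r) = fun ω => ⨆ x : S, f x.1.1 ω :=
    funext fun ω => (hSdense.ciSup' ((hcont ω).mono inter_subset_left).domRestrict).symm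
  rw [hsup]
  exact Measurable.iSup fun x => hmeas _ x.1.2.1

end ballSup

section UniformStrongLaw

variable {Ω Ω' : Type*} [MeasurableSpace Ω] [MeasurableSpace Ω'] {μ : Measure Ω}
  {P : Measure Ω'} {X : ℕ → Ω' → Ω}

lemma ae_tendsto_empiricalMean (hX : ∀ i, Measurable (X i)) (hXlaw : ∀ i, P.map (X i) = μ)
    (hXindep : Pairwise fun i j => IndepFun (X i) (X j) P) {U : Ω → ℝ} (hU : Measurable U)
    (hUint : Integrable U μ) :
    ∀ᵐ ω' ∂P, Tendsto (fun n : ℕ => 1 / (n : ℝ) * ∑ i ∈ Finset.range n, U (X i ω')) atTop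
      (𝓝 (∫ ω, U ω ∂μ)) := by
  have hslln := strong_law_ae_real (fun i => U ∘ X i)
    ((hXlaw 0 ▸ hUint).comp_measurable (hX 0)) (fun i j hij => (hXindep hij).comp hU hU)
    fun i => IdentDistrib.comp ⟨(hX i).aemeasurable, (hX 0).aemeasurable, by rw [hXlaw, hXlaw]⟩ hU
  rw [← hXlaw 0, integral_map (hX 0).aemeasurable hU.aestronglyMeasurable]
  simpa only [one_div_mul_eq_div, Function.comp_apply] using hslln

variable [IsProbabilityMeasure μ] {E : Type*} [PseudoMetricSpace E] {K : Set E}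
  {f : E → Ω → ℝ} {M : ℝ}

lemma exists_integral_ballSup_le (hK : TopologicalSpace.IsSeparable K)
    (hmeas : ∀ x ∈ K, Measurable (f x)) (hcont : ∀ ω, ContinuousOn (f · ω) K)
    (hbdd : ∀ x ∈ K, ∀ ω, |f x ω| ≤ M) {c : E} (hc : c ∈ K) {ε : ℝ} (hε : 0 < ε) :
    ∃ r > 0, ∀ x ∈ K ∩ ball c r, ∫ ω, ballSup (f · ω) K c r ∂μ ≤ ∫ ω, f x ω ∂μ + ε := by
  have henvelope : Tendsto (fun r => ∫ ω, ballSup (f · ω) K c r ∂μ) (𝓝[>] 0)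
      (𝓝 (∫ ω, f c ω ∂μ)) :=
    tendsto_integral_filter_of_dominated_convergence (fun _ => M)
      (.of_forall fun _ => (measurable_ballSup hK hmeas hcont).aestronglyMeasurable)
      (eventually_mem_nhdsWithin.mono fun _ hr =>
        .of_forall fun ω => abs_ballSup_le hc hr (hbdd · · ω))
      (integrable_const M)
      (.of_forall fun ω => tendsto_ballSup hc (hcont ω c hc) fun x hx => (abs_le.1 (hbdd x hx ω)).2)
  have hmean : ContinuousWithinAt (fun x => ∫ ω, f x ω ∂μ) K c :=
    continuousWithinAt_of_dominated
      (eventually_mem_nhdsWithin.mono fun x hx => (hmeas x hx).aestronglyMeasurable)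
      (eventually_mem_nhdsWithin.mono fun x hx => .of_forall (hbdd x hx))
      (integrable_const M) (.of_forall fun ω => hcont ω c hc)
  obtain ⟨δ, hδ, hnear⟩ := Metric.mem_nhdsWithin_iff.1
    (hmean.eventually (eventually_gt_nhds (sub_lt_self _ (half_pos hε))))
  obtain ⟨r, ⟨hr, hrδ⟩, hr_env⟩ := (Eventually.and (Ioo_mem_nhdsGT hδ)
    (henvelope.eventually (eventually_lt_nhds (lt_add_of_pos_right _ (half_pos hε))))).exists
  refine ⟨r, hr, fun x hx => ?_⟩
  have hx_near : ∫ ω, f c ω ∂μ - ε / 2 < ∫ ω, f x ω ∂μ :=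
    hnear ⟨ball_subset_ball hrδ.le hx.2, hx.1⟩
  linarith

lemma exists_finset_integral_ballSup_le (hK : IsCompact K)
    (hmeas : ∀ x ∈ K, Measurable (f x)) (hcont : ∀ ω, ContinuousOn (f · ω) K)
    (hbdd : ∀ x ∈ K, ∀ ω, |f x ω| ≤ M) {ε : ℝ} (hε : 0 < ε) :
    ∃ (t : Finset E) (r : E → ℝ), (∀ c ∈ t, c ∈ K ∧ 0 < r c) ∧ ∀ x ∈ K, ∃ c ∈ t,
      x ∈ ball c (r c) ∧ ∫ ω, ballSup (f · ω) K c (r c) ∂μ ≤ ∫ ω, f x ω ∂μ + ε := by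
  choose! r hr hr_env using fun c (hc : c ∈ K) =>
    exists_integral_ballSup_le (μ := μ) hK.isSeparable hmeas hcont hbdd hc hε
  obtain ⟨t, htK, hcover⟩ := hK.elim_nhds_subcover (fun c => ball c (r c))
    fun c hc => ball_mem_nhds c (hr c hc)
  refine ⟨t, r, fun c hc => ⟨htK c hc, hr c (htK c hc)⟩, fun x hx => ?_⟩
  obtain ⟨c, hct, hxc⟩ := mem_iUnion₂.1 (hcover hx)
  exact ⟨c, hct, hxc, hr_env c (htK c hct) x ⟨hx, hxc⟩⟩

lemma ae_eventually_empiricalMean_le (hX : ∀ i, Measurable (X i))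
    (hXlaw : ∀ i, P.map (X i) = μ) (hXindep : Pairwise fun i j => IndepFun (X i) (X j) P)
    (hK : IsCompact K)
    (hmeas : ∀ x ∈ K, Measurable (f x)) (hcont : ∀ ω, ContinuousOn (f · ω) K)
    (hbdd : ∀ x ∈ K, ∀ ω, |f x ω| ≤ M) {ε : ℝ} (hε : 0 < ε) :
    ∀ᵐ ω' ∂P, ∀ᶠ n : ℕ in atTop, ∀ x ∈ K,
      1 / (n : ℝ) * ∑ i ∈ Finset.range n, f x (X i ω') ≤ ∫ ω, f x ω ∂μ + ε := by
  obtain ⟨t, r, htr, hbracket⟩ :=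
    exists_finset_integral_ballSup_le (μ := μ) hK hmeas hcont hbdd (half_pos hε)
  have hslln : ∀ᵐ ω' ∂P, ∀ c ∈ t, Tendsto
      (fun n : ℕ => 1 / (n : ℝ) * ∑ i ∈ Finset.range n, ballSup (f · (X i ω')) K c (r c))
      atTop (𝓝 (∫ ω, ballSup (f · ω) K c (r c) ∂μ)) := by
    refine (eventually_all_finset t).2 fun c hc => ?_
    have hU := measurable_ballSup (c := c) (r := r c) hK.isSeparable hmeas hcont
    exact ae_tendsto_empiricalMean hX hXlaw hXindep hU <| .of_bound hU.aestronglyMeasurable M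
      (.of_forall fun ω => abs_ballSup_le (htr c hc).1 (htr c hc).2 (hbdd · · ω))
  filter_upwards [hslln] with ω' hω'
  filter_upwards [(eventually_all_finset t).2 fun c hc =>
    (hω' c hc).eventually (eventually_lt_nhds (lt_add_of_pos_right _ (half_pos hε)))]
    with n hn x hx
  obtain ⟨c, hct, hxc, hc_env⟩ := hbracket x hx
  calc 1 / (n : ℝ) * ∑ i ∈ Finset.range n, f x (X i ω')
      ≤ 1 / (n : ℝ) * ∑ i ∈ Finset.range n, ballSup (f · (X i ω')) K c (r c) := by
        gcongr with i
        exact le_ballSup (fun y hy => (abs_le.1 (hbdd y hy _)).2) ⟨hx, hxc⟩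
    _ ≤ ∫ ω, ballSup (f · ω) K c (r c) ∂μ + ε / 2 := (hn c hct).le
    _ ≤ ∫ ω, f x ω ∂μ + ε := by linarith

theorem ae_tendstoUniformlyOn_empiricalMean (hX : ∀ i, Measurable (X i))
    (hXlaw : ∀ i, P.map (X i) = μ) (hXindep : Pairwise fun i j => IndepFun (X i) (X j) P)
    (hK : IsCompact K)
    (hmeas : ∀ x ∈ K, Measurable (f x)) (hcont : ∀ ω, ContinuousOn (f · ω) K)
    (hbdd : ∀ x ∈ K, ∀ ω, |f x ω| ≤ M) :
    ∀ᵐ ω' ∂P, TendstoUniformlyOn (fun (n : ℕ) x => 1 / (n : ℝ) * ∑ i ∈ Finset.range n, f x (X i ω'))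
      (fun x => ∫ ω, f x ω ∂μ) atTop K := by
  simp_rw [Metric.tendstoUniformlyOn_iff]
  refine eventually_forall_pos_of_forall_pos
    (fun _ _ _ hεε' h => h.mono fun _ hn x hx => (hn x hx).trans_le hεε') fun ε hε => ?_
  have hupper := ae_eventually_empiricalMean_le hX hXlaw hXindep hK hmeas hcont hbdd (half_pos hε)
  have hlower := ae_eventually_empiricalMean_le hX hXlaw hXindep hK (f := fun x ω => -f x ω)
    (fun x hx => (hmeas x hx).neg) (fun ω => (hcont ω).neg)
    (fun x hx ω => (abs_neg (f x ω)).trans_le (hbdd x hx ω)) (half_pos hε)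
  filter_upwards [hupper, hlower] with ω' hup hlow
  filter_upwards [hup, hlow] with n hn hn' x hx
  have hneg := hn' x hx
  simp only [Finset.sum_neg_distrib, mul_neg, integral_neg] at hneg
  rw [Real.dist_eq, abs_sub_lt_iff]
  constructor <;> linarith [hn x hx]

end UniformStrongLaw

end ReMINE

open ReMINE

theorem remine_estimation_lemma_general
    {Ω : Type*} [MeasurableSpace Ω]
    (μ ν : Measure Ω) [IsProbabilityMeasure μ] [IsProbabilityMeasure ν]
    (d : ℕ) (Θ : Set (EuclideanSpace ℝ (Fin d))) (hΘ : IsCompact Θ)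
    (T : EuclideanSpace ℝ (Fin d) → Ω → ℝ) (M : ℝ)
    (hTmeas : Measurable (Function.uncurry T))
    (hTcont : ∀ ω, ContinuousOn (fun θ => T θ ω) Θ)
    (hTbdd : ∀ θ ∈ Θ, ∀ ω, |T θ ω| ≤ M)
    (Cstar : ℝ)
    {Ω' : Type*} [MeasurableSpace Ω'] (P : Measure Ω')
    (X Y : ℕ → Ω' → Ω)
    (hXmeas : ∀ i, Measurable (X i)) (hYmeas : ∀ i, Measurable (Y i))
    (hXlaw : ∀ i, P.map (X i) = μ) (hYlaw : ∀ i, P.map (Y i) = ν)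
    (hindep : iIndepFun (Sum.elim X Y) P) :
    ∀ᵐ ω' ∂P, ∀ η > (0 : ℝ), ∃ N : ℕ, ∀ n ≥ N,
      |(⨆ θ : Θ,
          ((1 / (n : ℝ)) * ∑ i ∈ Finset.range n, T θ.1 (X i ω')
            - Real.log ((1 / (n : ℝ)) * ∑ i ∈ Finset.range n, Real.exp (T θ.1 (Y i ω')))
            - |Real.log ((1 / (n : ℝ)) * ∑ i ∈ Finset.range n, Real.exp (T θ.1 (Y i ω')))
                - Cstar|))
        - (⨆ θ : Θ,
          (∫ ω, T θ.1 ω ∂μ - Real.log (∫ ω, Real.exp (T θ.1 ω) ∂ν)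
            - |Real.log (∫ ω, Real.exp (T θ.1 ω) ∂ν) - Cstar|))| ≤ η := by
  have hXindep : Pairwise fun i j => IndepFun (X i) (X j) P := fun i j hij =>
    hindep.indepFun (Sum.inl_injective.ne hij)
  have hYindep : Pairwise fun i j => IndepFun (Y i) (Y j) P := fun i j hij =>
    hindep.indepFun (Sum.inr_injective.ne hij)
  have hT : ∀ θ ∈ Θ, ∀ ω, T θ ω ∈ Icc (-M) M := fun θ hθ ω => abs_le.1 (hTbdd θ hθ ω)
  have hexpT : ∀ θ ∈ Θ, ∀ ω, exp (T θ ω) ∈ Icc (exp (-M)) (exp M) := fun θ hθ ω =>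
    ⟨exp_le_exp.2 (hT θ hθ ω).1, exp_le_exp.2 (hT θ hθ ω).2⟩
  have hexpT_bdd : ∀ θ ∈ Θ, ∀ ω, |exp (T θ ω)| ≤ exp M := fun θ hθ ω =>
    (abs_of_pos (exp_pos _)).trans_le (hexpT θ hθ ω).2
  have hexp_mean : ∀ θ ∈ Θ, ∫ ω, exp (T θ ω) ∂ν ∈ Icc (exp (-M)) (exp M) := fun θ hθ =>
    integral_mem_Icc hTmeas.of_uncurry_left.exp.aestronglyMeasurable (.of_forall (hexpT θ hθ))
  have hbdd : BddAbove ((fun θ => ∫ ω, T θ ω ∂μ - log (∫ ω, exp (T θ ω) ∂ν)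
      - |log (∫ ω, exp (T θ ω) ∂ν) - Cstar|) '' Θ) := by
    refine ⟨M - log (exp (-M)), ?_⟩
    rintro _ ⟨θ, hθ, rfl⟩
    exact sub_log_sub_abs_log_sub_le (integral_mem_Icc hTmeas.of_uncurry_left.aestronglyMeasurable
      (.of_forall (hT θ hθ))).2 (exp_pos _) (hexp_mean θ hθ).1
  filter_upwards [ae_tendstoUniformlyOn_empiricalMean hXmeas hXlaw hXindep hΘ
      (fun θ _ => hTmeas.of_uncurry_left) hTcont hTbdd,
    ae_tendstoUniformlyOn_empiricalMean hYmeas hYlaw hYindep hΘ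
      (fun θ _ => hTmeas.of_uncurry_left.exp) (fun ω => (hTcont ω).rexp) hexpT_bdd]
    with ω' hA hB η hη
  obtain ⟨N, hN⟩ := Metric.tendsto_atTop.1 ((tendstoUniformlyOn_sub_log_sub_abs_log_sub Cstar
    (exp_pos (-M)) hA hB hexp_mean).tendsto_iSup hbdd) η hη
  exact ⟨N, fun n hn => (hN n hn).le⟩

/-- Estimation lemma for ReMINE: over a compact parameter set `Θ ⊆ ℝ^d`, with a jointly
measurable critic family `T` that is continuous in `θ` and uniformly bounded by `M`, and
with `(X_i)` i.i.d. of law `μ` and `(Y_i)` i.i.d. of law `ν`, independent of each other,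
the empirical ReMINE value `Î_n` (with absolute-value regularizer towards `C*`) converges
almost surely to the population value `Î`: almost surely, for every `η > 0` there is `N`
such that `|Î_n − Î| ≤ η` for all `n ≥ N`. -/
theorem remine_estimation_lemma
    {Ω : Type*} [MeasurableSpace Ω]
    (μ ν : Measure Ω) [IsProbabilityMeasure μ] [IsProbabilityMeasure ν]
    (d : ℕ) (Θ : Set (EuclideanSpace ℝ (Fin d))) (hΘ : IsCompact Θ)
    (T : EuclideanSpace ℝ (Fin d) → Ω → ℝ) (M : ℝ)
    (hTmeas : Measurable (Function.uncurry T))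
    (hTcont : ∀ ω, ContinuousOn (fun θ => T θ ω) Θ)
    (hTbdd : ∀ θ ∈ Θ, ∀ ω, |T θ ω| ≤ M)
    (Cstar : ℝ)
    {Ω' : Type*} [MeasurableSpace Ω'] (P : Measure Ω') [IsProbabilityMeasure P]
    (X Y : ℕ → Ω' → Ω)
    (hXmeas : ∀ i, Measurable (X i)) (hYmeas : ∀ i, Measurable (Y i))
    (hXlaw : ∀ i, P.map (X i) = μ) (hYlaw : ∀ i, P.map (Y i) = ν)
    (hindep : iIndepFun (Sum.elim X Y) P) :
    ∀ᵐ ω' ∂P, ∀ η > (0 : ℝ), ∃ N : ℕ, ∀ n ≥ N,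
      |(⨆ θ : Θ,
          ((1 / (n : ℝ)) * ∑ i ∈ Finset.range n, T θ.1 (X i ω')
            - Real.log ((1 / (n : ℝ)) * ∑ i ∈ Finset.range n, Real.exp (T θ.1 (Y i ω')))
            - |Real.log ((1 / (n : ℝ)) * ∑ i ∈ Finset.range n, Real.exp (T θ.1 (Y i ω')))
                - Cstar|))
        - (⨆ θ : Θ,
          (∫ ω, T θ.1 ω ∂μ - Real.log (∫ ω, Real.exp (T θ.1 ω) ∂ν)
            - |Real.log (∫ ω, Real.exp (T θ.1 ω) ∂ν) - Cstar|))| ≤ η :=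
  remine_estimation_lemma_general μ ν d Θ hΘ T M hTmeas hTcont hTbdd Cstar P X Y hXmeas hYmeas hXlaw
    hYlaw hindep
end
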